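/- arXiv:2508.10776 — 3 statements merged into one kernel-verified Lean document; each statement's English description precedes it below -/
import Mathlib

section
/- Let Σ be a symmetric positive definite n×n real matrix, 𝟙 ∈ ℝⁿ the all-ones vector, D = 𝟙ᵀΣ⁻¹𝟙 and w = Σ⁻¹𝟙 / D. The GMVP map G : A ↦ A⁻¹𝟙 / (𝟙ᵀA⁻¹𝟙), defined on n×n real matrices, is Fréchet differentiable at Σ, and its derivative in an arbitrary direction H (an n×n matrix) is given by D_Σ G [H] = −Σ⁻¹ H w + D (wᵀ H w) w. -/
open Matrix

noncomputable section

attribute [local instance] Matrix.normedAddCommGroup Matrix.normedSpace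

/-- The all-ones vector in ℝⁿ. -/
def ones (n : ℕ) : Fin n → ℝ := fun _ => 1

/-- `D = 𝟙ᵀ Σ⁻¹ 𝟙`. -/
def Dcoef (n : ℕ) (S : Matrix (Fin n) (Fin n) ℝ) : ℝ :=
  ones n ⬝ᵥ (S⁻¹ *ᵥ ones n)

/-- The GMVP map `G : A ↦ A⁻¹𝟙 / (𝟙ᵀA⁻¹𝟙)`. -/
def gmvp (n : ℕ) (S : Matrix (Fin n) (Fin n) ℝ) : Fin n → ℝ :=
  (Dcoef n S)⁻¹ • (S⁻¹ *ᵥ ones n)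

/-!
Writing `f A = A⁻¹ 𝟙`, the GMVP map is `f / ⟨𝟙, f⟩`, and `⟨𝟙, f Σ⟩ = D > 0` by positive
definiteness. The quotient rule expresses its derivative through `f'(H) = -Σ⁻¹ H Σ⁻¹ 𝟙`, the
derivative of matrix inversion applied to `𝟙`; since `Σ⁻¹ 𝟙 = D w` and `Σ⁻¹` is symmetric,
`⟨𝟙, f'(H)⟩ = -D² wᵀ H w`, and the two terms of the quotient rule become `-Σ⁻¹ H w` and
`D (wᵀ H w) w`.
-/

theorem map_ringInverse {F M N : Type*} [MonoidWithZero M] [MonoidWithZero N] [EquivLike F M N]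
    [MulEquivClass F M N] (e : F) (a : M) : e (Ring.inverse a) = Ring.inverse (e a) := by
  by_cases ha : IsUnit a
  · have hmul : e a * e (Ring.inverse a) = 1 := by
      rw [← map_mul, Ring.mul_inverse_cancel a ha, map_one]
    rw [← Ring.inverse_mul_cancel_left (e a) (e (Ring.inverse a)) (ha.map e), hmul, mul_one]
  · rw [Ring.inverse_non_unit a ha, Ring.inverse_non_unit _ (mt (isUnit_map_iff e a).mp ha),
      map_zero]

/-- The entrywise sup norm is not submultiplicative, so `hasFDerivAt_ringInverse` is applied to the
operator algebra and transported back along `toEuclideanCLM`. -/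
theorem Matrix.hasFDerivAt_inv {𝕜 m : Type*} [RCLike 𝕜] [Fintype m] [DecidableEq m]
    {S : Matrix m m 𝕜} (hS : IsUnit S) :
    HasFDerivAt (fun A : Matrix m m 𝕜 => A⁻¹)
      (-(LinearMap.mulLeftRight 𝕜 (S⁻¹, S⁻¹)).toContinuousLinearMap) S := by
  let Ψ := toEuclideanCLM (n := m) (𝕜 := 𝕜)
  let Φ := Ψ.toAlgEquiv.toLinearEquiv.toContinuousLinearEquiv
  have hΦ : (fun A : Matrix m m 𝕜 => A⁻¹) = fun A => Φ.symm (Ring.inverse (Φ A)) := by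
    funext A
    change A⁻¹ = Ψ.symm (Ring.inverse (Ψ A))
    rw [← map_ringInverse, StarAlgEquiv.symm_apply_apply, Matrix.nonsing_inv_eq_ringInverse]
  rw [hΦ]
  have := Φ.symm.hasFDerivAt.comp S
    ((hasFDerivAt_ringInverse (𝕜 := 𝕜) (hS.map Ψ).unit).comp S Φ.hasFDerivAt)
  refine this.congr_fderiv (ContinuousLinearMap.ext fun H => ?_)
  rw [← Ring.inverse_of_isUnit]
  change Ψ.symm (-(Ring.inverse (Ψ S) * Ψ H * Ring.inverse (Ψ S))) = -(S⁻¹ * H * S⁻¹)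
  rw [← map_ringInverse, ← map_mul, ← map_mul, ← map_neg, StarAlgEquiv.symm_apply_apply,
    Matrix.nonsing_inv_eq_ringInverse]

theorem Matrix.hasFDerivAt_inv_mulVec {𝕜 m : Type*} [RCLike 𝕜] [Fintype m] [DecidableEq m]
    {S : Matrix m m 𝕜} (hS : IsUnit S) (v : m → 𝕜) :
    ∃ L : Matrix m m 𝕜 →L[𝕜] (m → 𝕜), HasFDerivAt (fun A : Matrix m m 𝕜 => A⁻¹ *ᵥ v) L S ∧
      ∀ H, L H = -(S⁻¹ *ᵥ (H *ᵥ (S⁻¹ *ᵥ v))) := by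
  let ℓ : Matrix m m 𝕜 →ₗ[𝕜] m → 𝕜 := LinearMap.applyₗ v ∘ₗ Matrix.toLin'.toLinearMap
  refine ⟨ℓ.toContinuousLinearMap.comp _,
    ℓ.toContinuousLinearMap.hasFDerivAt.comp S (Matrix.hasFDerivAt_inv hS), fun H => ?_⟩
  simp [ℓ, mulVec_mulVec]

theorem exists_hasFDerivAt_inv_apply_smul {𝕜 E F : Type*} [NontriviallyNormedField 𝕜]
    [NormedAddCommGroup E] [NormedSpace 𝕜 E] [NormedAddCommGroup F] [NormedSpace 𝕜 F]
    {f d : E → F} {x : E} (hf : ∃ f' : E →L[𝕜] F, HasFDerivAt f f' x ∧ ∀ h, f' h = d h)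
    (φ : F →L[𝕜] 𝕜) (hx : φ (f x) ≠ 0) :
    ∃ L : E →L[𝕜] F, HasFDerivAt (fun y => (φ (f y))⁻¹ • f y) L x ∧
      ∀ h, L h = (φ (f x))⁻¹ • d h - ((φ (f x))⁻¹ * φ (d h)) • (φ (f x))⁻¹ • f x := by
  obtain ⟨f', hf, hd⟩ := hf
  have hc := (hasDerivAt_inv hx).comp_hasFDerivAt x (φ.hasFDerivAt.comp x hf)
  refine ⟨_, hc.smul hf, fun h => ?_⟩
  simp only [Function.comp_apply, _root_.add_apply, _root_.smul_apply,
    ContinuousLinearMap.smulRight_apply, ContinuousLinearMap.comp_apply, smul_eq_mul, hd]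
  module

theorem Matrix.IsSymm.dotProduct_mulVec_comm {R m : Type*} [CommSemiring R] [Fintype m]
    {A : Matrix m m R} (hA : A.IsSymm) (u v : m → R) : u ⬝ᵥ (A *ᵥ v) = (A *ᵥ u) ⬝ᵥ v := by
  rw [dotProduct_mulVec, ← mulVec_transpose, hA.eq]

theorem Matrix.PosDef.isSymm {m : Type*} [Fintype m] {S : Matrix m m ℝ} (hS : S.PosDef) :
    S.IsSymm := by
  simpa only [IsHermitian, IsSymm, conjTranspose_eq_transpose_of_trivial] using hS.isHermitian

/-- The GMVP map `G : A ↦ A⁻¹𝟙 / (𝟙ᵀA⁻¹𝟙)` is Fréchet differentiable at a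
symmetric positive definite `Σ`, with derivative in direction `H` given by
`D_Σ G [H] = −Σ⁻¹ H w + D (wᵀ H w) w`, where `D = 𝟙ᵀΣ⁻¹𝟙` and `w = Σ⁻¹𝟙 / D`. -/
theorem gmvp_hasFDerivAt (n : ℕ) (hn : 1 ≤ n)
    (S : Matrix (Fin n) (Fin n) ℝ) (hS : S.PosDef) :
    ∃ L : Matrix (Fin n) (Fin n) ℝ →L[ℝ] (Fin n → ℝ),
      HasFDerivAt (gmvp n) L S ∧
        ∀ H : Matrix (Fin n) (Fin n) ℝ,
          L H = -(S⁻¹ *ᵥ (H *ᵥ gmvp n S)) +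
            (Dcoef n S * (gmvp n S ⬝ᵥ (H *ᵥ gmvp n S))) • gmvp n S := by
  have hones : ones n ≠ 0 := fun h => one_ne_zero (congrFun h ⟨0, hn⟩)
  have hD : Dcoef n S ≠ 0 := by
    have hpos := hS.inv.dotProduct_mulVec_pos hones
    rw [star_trivial] at hpos
    exact hpos.ne'
  obtain ⟨L, hL, hLH⟩ := exists_hasFDerivAt_inv_apply_smul
    (Matrix.hasFDerivAt_inv_mulVec hS.isUnit (ones n))
    (dotProductBilin ℝ ℝ (ones n)).toContinuousLinearMap hD
  refine ⟨L, hL, fun H => (hLH H).trans ?_⟩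
  have hw : S⁻¹ *ᵥ ones n = Dcoef n S • gmvp n S := (smul_inv_smul₀ hD _).symm
  show (Dcoef n S)⁻¹ • -(S⁻¹ *ᵥ (H *ᵥ (S⁻¹ *ᵥ ones n))) -
      ((Dcoef n S)⁻¹ * (ones n ⬝ᵥ -(S⁻¹ *ᵥ (H *ᵥ (S⁻¹ *ᵥ ones n))))) • gmvp n S = _
  rw [dotProduct_neg, hS.inv.isSymm.dotProduct_mulVec_comm, hw]
  simp only [mulVec_smul, dotProduct_smul, smul_dotProduct, smul_eq_mul]
  rw [smul_neg, inv_smul_smul₀ hD, mul_neg, inv_mul_cancel_left₀ hD, neg_smul, sub_neg_eq_add]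

end
end

section
/- Let Σ be a symmetric positive definite n×n real matrix, 𝟙 ∈ ℝⁿ the all-ones vector, D = 𝟙ᵀΣ⁻¹𝟙, w = Σ⁻¹𝟙 / D, a = wᵀw, b = wᵀΣ⁻¹w, c = wᵀ(Σ⁻¹)²w, and R₂ = D² a (w ⊗ w)(w ⊗ w)ᵀ − D (w ⊗ Σ⁻¹w)(w ⊗ w)ᵀ − D (w ⊗ w)(w ⊗ Σ⁻¹w)ᵀ. Then R₂ acts on the pair {w ⊗ Σ⁻¹w, w ⊗ w} by R₂ (w ⊗ Σ⁻¹w) = −Dab (w ⊗ Σ⁻¹w) + (D²a²b − Dac)(w ⊗ w) and R₂ (w ⊗ w) = −Da² (w ⊗ Σ⁻¹w) + (D²a³ − Dab)(w ⊗ w); i.e., span{w ⊗ Σ⁻¹w, w ⊗ w} is R₂-invariant and the matrix of R₂ in the (ordered) spanning set {w ⊗ Σ⁻¹w, w ⊗ w} is [[−Dab, −Da²], [D²a²b−Dac, D²a³−Dab]]. -/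
open Matrix
open scoped Kronecker

noncomputable section

/-- Kronecker product of two vectors in ℝⁿ, viewed as a vector in ℝ^{n²}
(indexed by `Fin n × Fin n`): `(u ⊗ v) (i,j) = u i * v j`. -/
def kronV {n : ℕ} (u v : Fin n → ℝ) : Fin n × Fin n → ℝ :=
  fun p => u p.1 * v p.2

/-- The decision-aware Jacobian `J = −wᵀ ⊗ Σ⁻¹ + D w (w ⊗ w)ᵀ` of the GMVP map,
an n×n² matrix (with column index `Fin n × Fin n`). -/
def Jmat (n : ℕ) (S : Matrix (Fin n) (Fin n) ℝ) : Matrix (Fin n) (Fin n × Fin n) ℝ :=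
  -(Matrix.reindex (Equiv.punitProd (Fin n)) (Equiv.refl (Fin n × Fin n))
      (Matrix.replicateRow Unit (gmvp n S) ⊗ₖ S⁻¹)) +
    Dcoef n S • Matrix.vecMulVec (gmvp n S) (kronV (gmvp n S) (gmvp n S))

/-- `R₂ = D² a (w⊗w)(w⊗w)ᵀ − D (w⊗Σ⁻¹w)(w⊗w)ᵀ − D (w⊗w)(w⊗Σ⁻¹w)ᵀ`, the low-rank
part of `Jᵀ J`, where `a = wᵀw`. -/
def R2 (n : ℕ) (S : Matrix (Fin n) (Fin n) ℝ) :
    Matrix (Fin n × Fin n) (Fin n × Fin n) ℝ :=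
  ((Dcoef n S) ^ 2 * (gmvp n S ⬝ᵥ gmvp n S)) •
      vecMulVec (kronV (gmvp n S) (gmvp n S)) (kronV (gmvp n S) (gmvp n S)) -
    Dcoef n S •
      vecMulVec (kronV (gmvp n S) (S⁻¹ *ᵥ gmvp n S)) (kronV (gmvp n S) (gmvp n S)) -
    Dcoef n S •
      vecMulVec (kronV (gmvp n S) (gmvp n S)) (kronV (gmvp n S) (S⁻¹ *ᵥ gmvp n S))

/-!
With `p = w ⊗ w` and `q = w ⊗ Σ⁻¹w`, `R₂ = D²a·ppᵀ − D·qpᵀ − D·pqᵀ`, so `R₂ x` is a combination of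
`p` and `q` whose coefficients are `p ⬝ x` and `q ⬝ x`. For `x ∈ {p, q}` these are Gram entries, which
factor as `(u ⊗ v) ⬝ (u' ⊗ v') = (u ⬝ u')(v ⬝ v')`: `p ⬝ p = a²`, `p ⬝ q = ab`, and, since `Σ⁻¹` is
symmetric, `q ⬝ q = ac`.
-/

theorem kronV_dotProduct_kronV {n : ℕ} (u v u' v' : Fin n → ℝ) :
    kronV u v ⬝ᵥ kronV u' v' = (u ⬝ᵥ u') * (v ⬝ᵥ v') := by
  simp only [kronV, dotProduct, Fintype.sum_prod_type, Finset.sum_mul_sum]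
  exact Finset.sum_congr rfl fun i _ => Finset.sum_congr rfl fun j _ => by ring

theorem mulVec_sub_vecMulVec_sub_vecMulVec {ι R : Type*} [Fintype ι] [CommRing R]
    (α β : R) (p q x : ι → R) :
    (α • vecMulVec p p - β • vecMulVec q p - β • vecMulVec p q) *ᵥ x =
      (α * (p ⬝ᵥ x) - β * (q ⬝ᵥ x)) • p - (β * (p ⬝ᵥ x)) • q := by
  simp only [sub_mulVec, smul_mulVec, vecMulVec_mulVec, op_smul_eq_smul, smul_smul]
  module

theorem Matrix.IsSymm.mulVec_dotProduct {ι R : Type*} [Fintype ι] [CommSemiring R]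
    {A : Matrix ι ι R} (hA : A.IsSymm) (u v : ι → R) :
    (A *ᵥ u) ⬝ᵥ v = u ⬝ᵥ (A *ᵥ v) := by
  rw [dotProduct_mulVec, ← mulVec_transpose, hA.eq]

theorem R2_action_on_span_general (n : ℕ)
    (S : Matrix (Fin n) (Fin n) ℝ) (hS : S.PosDef)
    (D a b c : ℝ) (hD : D = Dcoef n S)
    (ha : a = gmvp n S ⬝ᵥ gmvp n S)
    (hb : b = gmvp n S ⬝ᵥ (S⁻¹ *ᵥ gmvp n S))
    (hc : c = gmvp n S ⬝ᵥ ((S⁻¹ ^ 2) *ᵥ gmvp n S)) :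
    R2 n S *ᵥ kronV (gmvp n S) (S⁻¹ *ᵥ gmvp n S) =
        (-(D * a * b)) • kronV (gmvp n S) (S⁻¹ *ᵥ gmvp n S) +
          (D ^ 2 * a ^ 2 * b - D * a * c) • kronV (gmvp n S) (gmvp n S) ∧
      R2 n S *ᵥ kronV (gmvp n S) (gmvp n S) =
        (-(D * a ^ 2)) • kronV (gmvp n S) (S⁻¹ *ᵥ gmvp n S) +
          (D ^ 2 * a ^ 3 - D * a * b) • kronV (gmvp n S) (gmvp n S) := by
  have hSinv : S⁻¹.IsSymm := (isHermitian_iff_isSymm.mp hS.isHermitian).inv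
  have hvw : (S⁻¹ *ᵥ gmvp n S) ⬝ᵥ gmvp n S = gmvp n S ⬝ᵥ (S⁻¹ *ᵥ gmvp n S) :=
    hSinv.mulVec_dotProduct _ _
  have hvv : (S⁻¹ *ᵥ gmvp n S) ⬝ᵥ (S⁻¹ *ᵥ gmvp n S) = gmvp n S ⬝ᵥ ((S⁻¹ ^ 2) *ᵥ gmvp n S) := by
    rw [hSinv.mulVec_dotProduct, mulVec_mulVec, ← sq]
  subst hD ha hb hc
  rw [R2]
  simp only [mulVec_sub_vecMulVec_sub_vecMulVec, kronV_dotProduct_kronV, hvw, hvv]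
  constructor <;> module

/-- `R₂` leaves `span{w ⊗ Σ⁻¹w, w ⊗ w}` invariant, acting by
`R₂ (w ⊗ Σ⁻¹w) = −Dab (w ⊗ Σ⁻¹w) + (D²a²b − Dac)(w ⊗ w)` and
`R₂ (w ⊗ w) = −Da² (w ⊗ Σ⁻¹w) + (D²a³ − Dab)(w ⊗ w)`,
i.e. its matrix in the ordered spanning set `{w ⊗ Σ⁻¹w, w ⊗ w}` is
`[[−Dab, −Da²], [D²a²b−Dac, D²a³−Dab]]`. -/
theorem R2_action_on_span (n : ℕ) (hn : 1 ≤ n)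
    (S : Matrix (Fin n) (Fin n) ℝ) (hS : S.PosDef)
    (D a b c : ℝ) (hD : D = Dcoef n S)
    (ha : a = gmvp n S ⬝ᵥ gmvp n S)
    (hb : b = gmvp n S ⬝ᵥ (S⁻¹ *ᵥ gmvp n S))
    (hc : c = gmvp n S ⬝ᵥ ((S⁻¹ ^ 2) *ᵥ gmvp n S)) :
    R2 n S *ᵥ kronV (gmvp n S) (S⁻¹ *ᵥ gmvp n S) =
        (-(D * a * b)) • kronV (gmvp n S) (S⁻¹ *ᵥ gmvp n S) +
          (D ^ 2 * a ^ 2 * b - D * a * c) • kronV (gmvp n S) (gmvp n S) ∧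
      R2 n S *ᵥ kronV (gmvp n S) (gmvp n S) =
        (-(D * a ^ 2)) • kronV (gmvp n S) (S⁻¹ *ᵥ gmvp n S) +
          (D ^ 2 * a ^ 3 - D * a * b) • kronV (gmvp n S) (gmvp n S) :=
  R2_action_on_span_general n S hS D a b c hD ha hb hc

end
end

section
/- Let Σ be a symmetric positive definite n×n real matrix, 𝟙 ∈ ℝⁿ the all-ones vector, D = 𝟙ᵀΣ⁻¹𝟙, w = Σ⁻¹𝟙 / D, a = wᵀw, b = wᵀΣ⁻¹w, c = wᵀ(Σ⁻¹)²w, and R₁ = D² a² w wᵀ − D a (Σ⁻¹ w wᵀ + w wᵀ Σ⁻¹). Suppose D²a²b − Dac ≠ 0 and λ ∈ ℝ satisfies λ² − (D²a³ − 2Dab) λ + D²a²(b² − ac) = 0. Then the vector x(λ) = w + ((λ − (D²a³ − Dab)) / (D²a²b − Dac)) Σ⁻¹w satisfies R₁ x(λ) = λ x(λ). -/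
open Matrix
open scoped Kronecker

noncomputable section

/-- `R₁ = D² a² w wᵀ − D a (Σ⁻¹ w wᵀ + w wᵀ Σ⁻¹)`, the low-rank part of `J Jᵀ`,
where `a = wᵀw`. -/
def R1 (n : ℕ) (S : Matrix (Fin n) (Fin n) ℝ) : Matrix (Fin n) (Fin n) ℝ :=
  ((Dcoef n S) ^ 2 * (gmvp n S ⬝ᵥ gmvp n S) ^ 2) • vecMulVec (gmvp n S) (gmvp n S) -
    (Dcoef n S * (gmvp n S ⬝ᵥ gmvp n S)) •
      (S⁻¹ * vecMulVec (gmvp n S) (gmvp n S) + vecMulVec (gmvp n S) (gmvp n S) * S⁻¹)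

/-!
Since `Σ⁻¹` is symmetric, `R₁` maps every vector into the plane spanned by `w` and `Σ⁻¹w`, and on
the basis `(w, Σ⁻¹w)` it acts by the matrix `!![D²a³ − Dab, D²a²b − Dac; −Da², −Dab]`, whose
characteristic polynomial is the given one. The coordinates `(1, t)` of `x(λ)` form the
eigenvector of this 2×2 matrix normalised by its first coordinate.
-/

namespace Matrix

variable {ι R : Type*} [Fintype ι] [CommSemiring R] {M : Matrix ι ι R}

theorem IsSymm.dotProduct_mulVec_comm_s13 (hM : M.IsSymm) (v x : ι → R) :
    v ⬝ᵥ (M *ᵥ x) = (M *ᵥ v) ⬝ᵥ x := by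
  rw [dotProduct_mulVec, ← mulVec_transpose, hM.eq]

theorem IsSymm.mulVec_dotProduct_mulVec_self [DecidableEq ι] (hM : M.IsSymm) (v : ι → R) :
    (M *ᵥ v) ⬝ᵥ (M *ᵥ v) = v ⬝ᵥ ((M ^ 2) *ᵥ v) := by
  rw [← hM.dotProduct_mulVec_comm_s13, mulVec_mulVec, sq]

theorem mul_vecMulVec_mulVec {κ : Type*} (A : Matrix κ ι R) (v w x : ι → R) :
    (A * vecMulVec v w) *ᵥ x = (w ⬝ᵥ x) • (A *ᵥ v) := by
  rw [← mulVec_mulVec, vecMulVec_mulVec, op_smul_eq_smul, mulVec_smul]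

theorem IsSymm.vecMulVec_mul_mulVec (hM : M.IsSymm) (v w x : ι → R) :
    (vecMulVec v w * M) *ᵥ x = ((M *ᵥ w) ⬝ᵥ x) • v := by
  rw [← mulVec_mulVec, vecMulVec_mulVec, op_smul_eq_smul, hM.dotProduct_mulVec_comm_s13]

end Matrix

theorem fin_two_eigenvector_of_charpoly_eq_zero {K : Type*} [Field K] {p q r s lam : K}
    (hq : q ≠ 0) (hlam : lam ^ 2 - (p + s) * lam + (p * s - q * r) = 0) :
    p + q * ((lam - p) / q) = lam ∧ r + s * ((lam - p) / q) = lam * ((lam - p) / q) := by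
  have hqt : q * ((lam - p) / q) = lam - p := mul_div_cancel₀ _ hq
  refine ⟨by rw [hqt]; ring, ?_⟩
  apply mul_left_cancel₀ hq
  linear_combination (s - lam) * hqt - hlam

theorem R1_mulVec {n : ℕ} {S : Matrix (Fin n) (Fin n) ℝ} (hS : S⁻¹.IsSymm) (x : Fin n → ℝ) :
    R1 n S *ᵥ x =
      (Dcoef n S ^ 2 * (gmvp n S ⬝ᵥ gmvp n S) ^ 2 * (gmvp n S ⬝ᵥ x) -
          Dcoef n S * (gmvp n S ⬝ᵥ gmvp n S) * ((S⁻¹ *ᵥ gmvp n S) ⬝ᵥ x)) • gmvp n S -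
        (Dcoef n S * (gmvp n S ⬝ᵥ gmvp n S) * (gmvp n S ⬝ᵥ x)) • (S⁻¹ *ᵥ gmvp n S) := by
  rw [R1, sub_mulVec, smul_mulVec, smul_mulVec, add_mulVec, vecMulVec_mulVec, op_smul_eq_smul,
    mul_vecMulVec_mulVec, hS.vecMulVec_mul_mulVec]
  module

theorem R1_eigenvector_general (n : ℕ)
    (S : Matrix (Fin n) (Fin n) ℝ) (hS : S.PosDef)
    (D a b c : ℝ) (hD : D = Dcoef n S)
    (ha : a = gmvp n S ⬝ᵥ gmvp n S)
    (hb : b = gmvp n S ⬝ᵥ (S⁻¹ *ᵥ gmvp n S))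
    (hc : c = gmvp n S ⬝ᵥ ((S⁻¹ ^ 2) *ᵥ gmvp n S))
    (hne : D ^ 2 * a ^ 2 * b - D * a * c ≠ 0)
    (lam : ℝ)
    (hlam : lam ^ 2 - (D ^ 2 * a ^ 3 - 2 * D * a * b) * lam +
        D ^ 2 * a ^ 2 * (b ^ 2 - a * c) = 0) :
    R1 n S *ᵥ
        (gmvp n S +
          ((lam - (D ^ 2 * a ^ 3 - D * a * b)) / (D ^ 2 * a ^ 2 * b - D * a * c)) •
            (S⁻¹ *ᵥ gmvp n S)) =
      lam •
        (gmvp n S +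
          ((lam - (D ^ 2 * a ^ 3 - D * a * b)) / (D ^ 2 * a ^ 2 * b - D * a * c)) •
            (S⁻¹ *ᵥ gmvp n S)) := by
  have hsymm : S⁻¹.IsSymm := (isHermitian_iff_isSymm.mp hS.isHermitian).inv
  set w := gmvp n S
  set u := S⁻¹ *ᵥ w
  set t := (lam - (D ^ 2 * a ^ 3 - D * a * b)) / (D ^ 2 * a ^ 2 * b - D * a * c)
  have hwx : w ⬝ᵥ (w + t • u) = a + t * b := by
    rw [dotProduct_add, dotProduct_smul, ← ha, ← hb, smul_eq_mul]
  have hux : u ⬝ᵥ (w + t • u) = b + t * c := by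
    rw [dotProduct_add, dotProduct_smul, dotProduct_comm, ← hb,
      hsymm.mulVec_dotProduct_mulVec_self, ← hc, smul_eq_mul]
  obtain ⟨h₁, h₂⟩ := fin_two_eigenvector_of_charpoly_eq_zero (lam := lam)
    (p := D ^ 2 * a ^ 3 - D * a * b) (r := -(D * a ^ 2)) (s := -(D * a * b)) hne
    (by linear_combination hlam)
  rw [R1_mulVec hsymm, ← hD, ← ha, hwx, hux]
  linear_combination (norm := module) h₁ • w + h₂ • u

/-- If `D²a²b − Dac ≠ 0` and `λ` is a root of the shared characteristic polynomial
`λ² − (D²a³ − 2Dab) λ + D²a²(b² − ac)`, then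
`x(λ) = w + ((λ − (D²a³ − Dab)) / (D²a²b − Dac)) Σ⁻¹w` is an eigenvector of `R₁`
with eigenvalue `λ`. -/
theorem R1_eigenvector (n : ℕ) (hn : 1 ≤ n)
    (S : Matrix (Fin n) (Fin n) ℝ) (hS : S.PosDef)
    (D a b c : ℝ) (hD : D = Dcoef n S)
    (ha : a = gmvp n S ⬝ᵥ gmvp n S)
    (hb : b = gmvp n S ⬝ᵥ (S⁻¹ *ᵥ gmvp n S))
    (hc : c = gmvp n S ⬝ᵥ ((S⁻¹ ^ 2) *ᵥ gmvp n S))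
    (hne : D ^ 2 * a ^ 2 * b - D * a * c ≠ 0)
    (lam : ℝ)
    (hlam : lam ^ 2 - (D ^ 2 * a ^ 3 - 2 * D * a * b) * lam +
        D ^ 2 * a ^ 2 * (b ^ 2 - a * c) = 0) :
    R1 n S *ᵥ
        (gmvp n S +
          ((lam - (D ^ 2 * a ^ 3 - D * a * b)) / (D ^ 2 * a ^ 2 * b - D * a * c)) •
            (S⁻¹ *ᵥ gmvp n S)) =
      lam •
        (gmvp n S +
          ((lam - (D ^ 2 * a ^ 3 - D * a * b)) / (D ^ 2 * a ^ 2 * b - D * a * c)) •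
            (S⁻¹ *ᵥ gmvp n S)) :=
  R1_eigenvector_general n S hS D a b c hD ha hb hc hne lam hlam

end
end
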